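/- The first Robinson form R₁ does not lie in the Minkowski sum Σ_{3,6} + C_{3,6} of the SOS cone and the SONC cone of ternary sextics. -/

import Mathlib

open MvPolynomial

/-- Embed an exponent vector into `ℝⁿ`. -/
def expToVec {n : ℕ} (α : Fin n →₀ ℕ) : Fin n → ℝ := fun i => (α i : ℝ)

/-- `h` is a nonnegative circuit form of degree `d` in `n` variables: it is
homogeneous of degree `d`, nonnegative, its support consists of a set `S` of
affinely independent even exponent vectors with positive coefficients
(the outer terms), possibly together with one additional exponent `β` lying in
the relative interior of the convex hull of `S` (the inner term). -/
def IsNonnegCircuit {n : ℕ} (d : ℕ) (h : MvPolynomial (Fin n) ℝ) : Prop :=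
  h.IsHomogeneous d ∧ (∀ x : Fin n → ℝ, 0 ≤ eval x h) ∧
  ∃ S : Finset (Fin n →₀ ℕ),
    (∀ α ∈ S, (∀ i, Even (α i)) ∧ 0 < coeff α h) ∧
    AffineIndependent ℝ (fun a : {α : (Fin n →₀ ℕ) // α ∈ S} => expToVec a.1) ∧
    ((h.support : Set (Fin n →₀ ℕ)) = ↑S ∨
      ∃ β : Fin n →₀ ℕ, β ∉ S ∧ (h.support : Set (Fin n →₀ ℕ)) = insert β ↑S ∧
        expToVec β ∈ intrinsicInterior ℝ (convexHull ℝ (expToVec '' ↑S)))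

/-- `f` is a sum of squares of forms of degree `d` (hence a form of degree `2d`). -/
def IsSOSForm {n : ℕ} (d : ℕ) (f : MvPolynomial (Fin n) ℝ) : Prop :=
  ∃ (k : ℕ) (g : Fin k → MvPolynomial (Fin n) ℝ),
    (∀ i, (g i).IsHomogeneous d) ∧ f = ∑ i, (g i) ^ 2

/-- `f` is a sum of nonnegative circuit forms of degree `d` (SONC). -/
def IsSONC {n : ℕ} (d : ℕ) (f : MvPolynomial (Fin n) ℝ) : Prop :=
  ∃ (k : ℕ) (h : Fin k → MvPolynomial (Fin n) ℝ),
    (∀ i, IsNonnegCircuit d (h i)) ∧ f = ∑ i, h i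

/-- The first Robinson form. -/
noncomputable def Robinson1 : MvPolynomial (Fin 3) ℝ :=
  X 0 ^ 6 + X 1 ^ 6 + X 2 ^ 6
    - (X 0 ^ 4 * X 1 ^ 2 + X 0 ^ 4 * X 2 ^ 2 + X 1 ^ 4 * X 0 ^ 2 + X 1 ^ 4 * X 2 ^ 2
        + X 2 ^ 4 * X 0 ^ 2 + X 2 ^ 4 * X 1 ^ 2)
    + 3 * (X 0 ^ 2 * X 1 ^ 2 * X 2 ^ 2)

/-!
If `R₁ = ∑ pᵢ² + ∑ qⱼ` with cubic forms `pᵢ` and nonnegative circuit forms `qⱼ`, every summand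
vanishes at every zero of `R₁`.

A nonnegative circuit form vanishing at `(1,1,1)` and at the points obtained from it by setting
one coordinate to `0` or to `-1` is zero. Evaluating at these points shows that the inner
exponent `β` is even and that every outer exponent has the same zero coordinates as `β`. An even
sextic exponent in three variables with the zero pattern of `β`, but different from `β`, has
coordinates `6 - β i` where `β i ≠ 0`; so the outer exponents form a single point, whose convex
hull cannot contain `β`.

The eight zeros `(1,±1,0), (1,0,±1), (±1,1,1), (1,-1,1), (1,1,-1)` of `R₁` determine the value of a
ternary cubic at `(1,0,0)`. So all summands vanish at `(1,0,0)`, while `R₁(1,0,0) = 1`.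
-/

open Finset

lemma eval_eq_zero_of_sum_sq_add_sum {σ ι κ : Type*} [Fintype ι] [Fintype κ]
    {p : ι → MvPolynomial σ ℝ} {q : κ → MvPolynomial σ ℝ} {x : σ → ℝ}
    (hq : ∀ j, 0 ≤ eval x (q j)) (hx : eval x (∑ i, p i ^ 2 + ∑ j, q j) = 0) :
    (∀ i, eval x (p i) = 0) ∧ ∀ j, eval x (q j) = 0 := by
  simp only [map_add, map_sum, map_pow] at hx
  have hp : ∀ i ∈ univ, 0 ≤ eval x (p i) ^ 2 := fun i _ => sq_nonneg _
  obtain ⟨hp0, hq0⟩ :=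
    (add_eq_zero_iff_of_nonneg (sum_nonneg hp) (sum_nonneg fun j _ => hq j)).mp hx
  exact ⟨fun i => pow_eq_zero_iff two_ne_zero |>.mp
      ((sum_eq_zero_iff_of_nonneg hp).mp hp0 i (mem_univ i)),
    fun j => (sum_eq_zero_iff_of_nonneg fun j _ => hq j).mp hq0 j (mem_univ j)⟩

lemma eval_eq_sum_of_forall_monomial {R σ ι : Type*} [CommSemiring R] [Fintype σ] [Fintype ι]
    {d : ℕ} {p : MvPolynomial σ R} (hp : p.IsHomogeneous d) {x : σ → R} {w : ι → R}
    {v : ι → σ → R}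
    (h : ∀ α : σ →₀ ℕ, α.degree = d → ∏ i, x i ^ α i = ∑ k, w k * ∏ i, v k i ^ α i) :
    eval x p = ∑ k, w k * eval (v k) p := by
  simp only [eval_eq', mul_sum]
  rw [sum_comm]
  refine sum_congr rfl fun α hα => ?_
  rw [h α (by rw [Finsupp.degree_eq_weight_one]; exact hp (mem_support_iff.mp hα)), mul_sum]
  exact sum_congr rfl fun k _ => by ring

lemma eval_one_eq_sum_coeff {σ R : Type*} [Fintype σ] [CommSemiring R] (p : MvPolynomial σ R) :
    eval 1 p = ∑ α ∈ p.support, coeff α p := by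
  simp [eval_eq']

lemma eval_update_one_eq_sum {σ R : Type*} [Fintype σ] [DecidableEq σ] [CommSemiring R]
    (p : MvPolynomial σ R) (i : σ) (t : R) :
    eval (Function.update 1 i t) p = ∑ α ∈ p.support, coeff α p * t ^ α i := by
  rw [eval_eq']
  refine sum_congr rfl fun α _ => ?_
  rw [Fintype.prod_eq_single i fun j hj => by simp [Function.update_of_ne hj]]
  simp

lemma eq_zero_of_eval_one_eq_zero_of_coeff_pos {σ : Type*} [Fintype σ] {p : MvPolynomial σ ℝ}
    (hpos : ∀ α ∈ p.support, 0 < coeff α p) (h₁ : eval 1 p = 0) : p = 0 := by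
  rw [eval_one_eq_sum_coeff] at h₁
  rw [← support_eq_empty, eq_empty_iff_forall_notMem]
  exact fun α hα =>
    (hpos α hα).ne' ((sum_eq_zero_iff_of_nonneg fun β hβ => (hpos β hβ).le).mp h₁ α hα)

lemma mem_of_mem_convexHull_image {ι E : Type*} [AddCommGroup E] [Module ℝ E] {f : ι → E}
    (hf : Function.Injective f) {s : Set ι} (hs : s.Subsingleton) {x : ι}
    (hx : f x ∈ convexHull ℝ (f '' s)) : x ∈ s := by
  rwa [(hs.image f).convex.convexHull_eq, hf.mem_set_image] at hx

section InnerAndOuterCoefficients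

/-! `b` and `c` stand for the inner and outer coefficients of a circuit form and `m`, `e` for the
`i`-th coordinates of its exponents, so that the sums below are its values at
`Function.update 1 i t` for `t = 1, -1, 0`. -/

variable {ι : Type*} {S : Finset ι} {c : ι → ℝ} {e : ι → ℕ} {b : ℝ} {m : ℕ}

lemma even_of_add_sum_neg_one_pow (hb : b ≠ 0) (he : ∀ a ∈ S, Even (e a))
    (h₁ : b + ∑ a ∈ S, c a = 0) (hneg : b * (-1) ^ m + ∑ a ∈ S, c a * (-1) ^ e a = 0) :
    Even m := by
  rw [sum_congr rfl fun a ha => by rw [(he a ha).neg_one_pow, mul_one]] at hneg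
  have : b * ((-1) ^ m - 1) = 0 := by linarith
  have hm : (-1 : ℝ) ^ m = 1 := by
    linarith [(mul_eq_zero.mp this).resolve_left hb]
  exact (neg_one_pow_eq_one_iff_even (by norm_num)).mp hm

lemma eq_zero_iff_of_add_sum_zero_pow (hc : ∀ a ∈ S, 0 < c a)
    (h₁ : b + ∑ a ∈ S, c a = 0) (h₀ : b * 0 ^ m + ∑ a ∈ S, c a * 0 ^ e a = 0) :
    ∀ a ∈ S, e a = 0 ↔ m = 0 := by
  intro a ha
  rcases eq_or_ne m 0 with rfl | hm
  · have hsum : ∑ a ∈ S, c a * (1 - 0 ^ e a) = 0 := by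
      simp only [mul_sub, mul_one, sum_sub_distrib]; linarith
    have hnonneg : ∀ a ∈ S, 0 ≤ c a * (1 - 0 ^ e a) := fun a ha =>
      mul_nonneg (hc a ha).le (sub_nonneg.mpr (pow_le_one₀ le_rfl zero_le_one))
    have := (mul_eq_zero.mp ((sum_eq_zero_iff_of_nonneg hnonneg).mp hsum a ha)).resolve_left
      (hc a ha).ne'
    simpa using (zero_pow_eq_one₀ (M₀ := ℝ)).mp (by linarith)
  · rw [zero_pow hm, mul_zero, zero_add] at h₀
    have hnonneg : ∀ a ∈ S, 0 ≤ c a * 0 ^ e a := fun a ha =>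
      mul_nonneg (hc a ha).le (pow_nonneg le_rfl _)
    have := (mul_eq_zero.mp ((sum_eq_zero_iff_of_nonneg hnonneg).mp h₀ a ha)).resolve_left
      (hc a ha).ne'
    simpa [zero_pow_eq_zero, hm] using this

end InnerAndOuterCoefficients

lemma expToVec_injective {n : ℕ} : Function.Injective (expToVec (n := n)) :=
  fun _ _ h => Finsupp.ext fun i => by simpa [expToVec] using congrFun h i

lemma apply_eq_of_even_of_degree_six {α β : Fin 3 →₀ ℕ} (hα : ∀ i, Even (α i))
    (hβ : ∀ i, Even (β i)) (hdα : α.degree = 6) (hdβ : β.degree = 6)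
    (hs : α.support = β.support) (hne : α ≠ β) (i : Fin 3) :
    α i = if β i = 0 then 0 else 6 - β i := by
  simp only [Finsupp.degree_eq_sum, Fin.sum_univ_three] at hdα hdβ
  have hz (j : Fin 3) : α j = 0 ↔ β j = 0 := by simpa using (Finset.ext_iff.mp hs j).not
  have := hz 0; have := hz 1; have := hz 2
  have hne_coord : ¬ (α 0 = β 0 ∧ α 1 = β 1 ∧ α 2 = β 2) := fun h =>
    hne (Finsupp.ext fun j => by fin_cases j <;> simp [h])
  obtain ⟨a₀, _⟩ := hα 0; obtain ⟨a₁, _⟩ := hα 1; obtain ⟨a₂, _⟩ := hα 2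
  obtain ⟨b₀, _⟩ := hβ 0; obtain ⟨b₁, _⟩ := hβ 1; obtain ⟨b₂, _⟩ := hβ 2
  fin_cases i <;> simp only [Fin.zero_eta, Fin.mk_one, Fin.reduceFinMk] <;> split_ifs <;> omega

theorem IsNonnegCircuit.eq_zero_of_eval_eq_zero {h : MvPolynomial (Fin 3) ℝ}
    (hc : IsNonnegCircuit 6 h) (h₁ : eval 1 h = 0)
    (hneg : ∀ i, eval (Function.update 1 i (-1)) h = 0)
    (hzero : ∀ i, eval (Function.update 1 i 0) h = 0) : h = 0 := by
  obtain ⟨hhom, -, S, hS, -, hsupp | ⟨β, hβS, hsupp, hβ⟩⟩ := hc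
  · rw [Finset.coe_inj] at hsupp
    exact eq_zero_of_eval_one_eq_zero_of_coeff_pos (fun α hα => (hS α (hsupp ▸ hα)).2) h₁
  exfalso
  rw [← Finset.coe_insert, Finset.coe_inj] at hsupp
  have hdeg : ∀ α ∈ h.support, α.degree = 6 := fun α hα => by
    rw [Finsupp.degree_eq_weight_one]; exact hhom (mem_support_iff.mp hα)
  have hb : coeff β h ≠ 0 := mem_support_iff.mp (hsupp ▸ mem_insert_self β S)
  have heval : ∀ i t, eval (Function.update 1 i t) h =
      coeff β h * t ^ β i + ∑ α ∈ S, coeff α h * t ^ α i := fun i t => by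
    rw [eval_update_one_eq_sum, hsupp, sum_insert hβS]
  have hsum : coeff β h + ∑ α ∈ S, coeff α h = 0 := by
    rwa [eval_one_eq_sum_coeff, hsupp, sum_insert hβS] at h₁
  have hβ_even : ∀ i, Even (β i) := fun i =>
    even_of_add_sum_neg_one_pow hb (fun α hα => (hS α hα).1 i) hsum (heval i (-1) ▸ hneg i)
  have hsupport : ∀ α ∈ S, α.support = β.support := fun α hα => Finset.ext fun i => by
    simpa [not_iff_not] using
      eq_zero_iff_of_add_sum_zero_pow (fun α hα => (hS α hα).2) hsum (heval i 0 ▸ hzero i) α hα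
  have hβ_deg : β.degree = 6 := hdeg β (hsupp ▸ mem_insert_self β S)
  have hS_subsingleton : (S : Set (Fin 3 →₀ ℕ)).Subsingleton := fun α hα α' hα' => by
    have hα_eq (α) (hα : α ∈ S) := apply_eq_of_even_of_degree_six (hS α hα).1 hβ_even
      (hdeg α (hsupp ▸ mem_insert_of_mem hα)) hβ_deg (hsupport α hα) (ne_of_mem_of_not_mem hα hβS)
    ext i; rw [hα_eq α hα, hα_eq α' hα']
  exact hβS <| mem_of_mem_convexHull_image expToVec_injective hS_subsingleton
    (intrinsicInterior_subset hβ)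

lemma eval_update_one_robinson1 (i : Fin 3) (t : ℝ) :
    eval (Function.update 1 i t) Robinson1 = t ^ 2 * (t ^ 2 - 1) ^ 2 := by
  fin_cases i <;> simp [Robinson1] <;> ring

lemma eval_one_robinson1 : eval 1 Robinson1 = 0 := by
  simpa using eval_update_one_robinson1 0 1

noncomputable def cubicNodes : Fin 8 → Fin 3 → ℝ :=
  ![![1, 1, 0], ![1, -1, 0], ![1, 0, 1], ![1, 0, -1],
    ![1, 1, 1], ![-1, 1, 1], ![1, -1, 1], ![1, 1, -1]]

/-- Obtained by solving the linear system `∑ k, w k * (cubicNodes k)^α = (1,0,0)^α` over the ten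
cubic monomials `α`. -/
noncomputable def cubicWeights : Fin 8 → ℝ := ![1/2, 1/2, 1/2, 1/2, -1/4, 1/4, -1/4, -1/4]

lemma eval_eq_sum_cubicNodes {p : MvPolynomial (Fin 3) ℝ} (hp : p.IsHomogeneous 3) :
    eval ![1, 0, 0] p = ∑ k, cubicWeights k * eval (cubicNodes k) p := by
  refine eval_eq_sum_of_forall_monomial hp fun α hα => ?_
  rw [Finsupp.degree_eq_sum, Fin.sum_univ_three] at hα
  simp only [Fin.prod_univ_three]
  generalize α 0 = a, α 1 = b, α 2 = c at hα ⊢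
  obtain rfl : c = 3 - a - b := by omega
  have ha : a ≤ 3 := by omega
  have hb : b ≤ 3 - a := by omega
  interval_cases a <;> interval_cases b <;>
    norm_num [Fin.sum_univ_succ, cubicNodes, cubicWeights, Matrix.cons_val_two]

lemma eval_cubicNodes_robinson1 (k : Fin 8) : eval (cubicNodes k) Robinson1 = 0 := by
  fin_cases k <;> norm_num [cubicNodes, Robinson1, Matrix.cons_val_two]

/-- The first Robinson form is not in `Σ_{3,6} + C_{3,6}`, the Minkowski sum of the
SOS cone and the SONC cone of ternary sextics. -/
theorem robinson1_not_sos_plus_sonc :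
    ¬ ∃ g c : MvPolynomial (Fin 3) ℝ, IsSOSForm 3 g ∧ IsSONC 6 c ∧ Robinson1 = g + c := by
  rintro ⟨-, -, ⟨k, p, hp, rfl⟩, ⟨m, q, hq, rfl⟩, hR⟩
  have hvanish : ∀ x, eval x Robinson1 = 0 →
      (∀ i, eval x (p i) = 0) ∧ ∀ j, eval x (q j) = 0 := fun x hx =>
    eval_eq_zero_of_sum_sq_add_sum (fun j => (hq j).2.1 x) (hR ▸ hx)
  have hq0 : ∀ j, q j = 0 := fun j => (hq j).eq_zero_of_eval_eq_zero
    ((hvanish 1 eval_one_robinson1).2 j)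
    (fun i => (hvanish _ (by norm_num [eval_update_one_robinson1])).2 j)
    (fun i => (hvanish _ (by norm_num [eval_update_one_robinson1])).2 j)
  have hp0 : ∀ i, eval ![1, 0, 0] (p i) = 0 := fun i => by
    rw [eval_eq_sum_cubicNodes (hp i)]
    exact sum_eq_zero fun k _ => by rw [(hvanish _ (eval_cubicNodes_robinson1 k)).1 i, mul_zero]
  have hR₀ := congrArg (eval ![1, 0, 0]) hR
  norm_num [Robinson1, hp0, hq0, Matrix.cons_val_two] at hR₀
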